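/- Let n ≥ 1 and let A, B ∈ ℂ^{n×n}. For t ∈ ℝ sufficiently small, the matrices I − tA/2, I − tB/2 and I + P(t) are invertible, where P(t) = Cay(tA)·Cay(tB), and the matrix Ω(t) = 2(P(t) − I)(I + P(t))^{-1} satisfies Cay(Ω(t)) = P(t). Moreover, as t → 0, Ω(t) − [ t(A + B) + (t²/2)[A,B] − (t³/4)(ABA + BAB) ] = O(t⁴), i.e. there exist C₀, δ > 0 such that the norm of this difference is at most C₀|t|⁴ for |t| < δ. (BCH-formula for the Cayley transform.) -/

import Mathlib

/-
With `a = tA/2` and `b = tB/2`, the factor `(1 - b)⁻¹` commutes with `1 + b`, so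
`P = (1 - a)⁻¹ (1 + a)(1 + b) (1 - b)⁻¹`. Hence `1 + P = (1 - a)⁻¹ · 2(1 + ab) · (1 - b)⁻¹` and
`P - 1 = (1 - a)⁻¹ · 2(a + b) · (1 - b)⁻¹`, which gives the closed form
`Ω/2 = (1 - a)⁻¹ (a + b) (1 + ab)⁻¹ (1 - a)`. Inserting `(1 + ab)⁻¹ = 1 - ab + (ab)² (1 + ab)⁻¹`,
`Ω/2` minus the cubic BCH polynomial becomes `(1 - a)⁻¹` times terms of degree at least four in
`a, b`, and Neumann-series bounds on the inverses for `‖a‖, ‖b‖ ≤ 1/2` give the `O(t⁴)` estimate.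
The identity `Cay(Ω) = P` holds for every `P` with `1 + P` invertible.
-/

open scoped Ring

theorem Commute.ringInverse_left {M₀ : Type*} [MonoidWithZero M₀] {a b : M₀} (h : Commute a b) :
    Commute a⁻¹ʳ b := by
  by_cases ha : IsUnit a
  · obtain ⟨u, rfl⟩ := ha
    rw [Ring.inverse_unit]
    exact h.units_inv_left
  · rw [Ring.inverse_non_unit _ ha]
    exact Commute.zero_left b

namespace Ring

variable {R : Type*} [Ring R]

theorem inverse_mul_mul_inverse_add_one {u v : R} (hu : IsUnit u) (hv : IsUnit v) (x : R) :
    u⁻¹ʳ * x * v⁻¹ʳ + 1 = u⁻¹ʳ * (x + u * v) * v⁻¹ʳ := by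
  rw [mul_add, add_mul, ← mul_assoc, inverse_mul_cancel _ hu, one_mul, mul_inverse_cancel _ hv]

theorem inverse_mul_mul_inverse_sub_one {u v : R} (hu : IsUnit u) (hv : IsUnit v) (x : R) :
    u⁻¹ʳ * x * v⁻¹ʳ - 1 = u⁻¹ʳ * (x - u * v) * v⁻¹ʳ := by
  rw [mul_sub, sub_mul, ← mul_assoc, inverse_mul_cancel _ hu, one_mul, mul_inverse_cancel _ hv]

theorem inverse_mul_mul_inverse_mul_inverse {u v y : R} (hu : IsUnit u) (hv : IsUnit v)
    (hy : IsUnit y) (x : R) :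
    u⁻¹ʳ * x * v⁻¹ʳ * (u⁻¹ʳ * y * v⁻¹ʳ)⁻¹ʳ = u⁻¹ʳ * (x * y⁻¹ʳ) * u := by
  rw [inverse_mul (Or.inl (hu.ringInverse.mul hy)), inverse_mul (Or.inl hu.ringInverse),
    inverse_inverse hu, inverse_inverse hv, mul_assoc _ v⁻¹ʳ, inverse_mul_cancel_left _ _ hv]
  noncomm_ring

theorem two_mul_mul_inverse_two_mul {x y : R} (h2 : IsUnit (2 : R)) :
    2 * x * (2 * y)⁻¹ʳ = x * y⁻¹ʳ :=
  calc 2 * x * (2 * y)⁻¹ʳ = 2 * (x * y⁻¹ʳ) * 2⁻¹ʳ := by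
        rw [inverse_mul (Or.inl h2)]; simp only [mul_assoc]
    _ = x * y⁻¹ʳ := by rw [(Commute.ofNat_left 2 _).eq, mul_inverse_cancel_right _ _ h2]

theorem inverse_one_add_eq {x : R} (hx : IsUnit (1 + x)) :
    (1 + x)⁻¹ʳ = 1 - x + x ^ 2 * (1 + x)⁻¹ʳ :=
  calc (1 + x)⁻¹ʳ = (1 - x) * ((1 + x) * (1 + x)⁻¹ʳ) + x ^ 2 * (1 + x)⁻¹ʳ := by noncomm_ring
    _ = 1 - x + x ^ 2 * (1 + x)⁻¹ʳ := by rw [mul_inverse_cancel _ hx, mul_one]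

end Ring

open Ring

noncomputable section

variable {R : Type*} [Ring R]

/-- `cayley x` is the paper's `Cay(2x)`: halving the argument keeps the algebra free of `1/2`. -/
def cayley (x : R) : R := (1 - x)⁻¹ʳ * (1 + x)

/-- `invCayley p` is `Ω/2` for the paper's `Ω = 2(p - 1)(1 + p)⁻¹`. -/
def invCayley (p : R) : R := (p - 1) * (1 + p)⁻¹ʳ

/-- At `a = tA/2`, `b = tB/2` this is half of `t(A + B) + (t²/2)[A,B] - (t³/4)(ABA + BAB)`. -/
def cayleyBCHPoly (a b : R) : R := a + b + (a * b - b * a) - (a * b * a + b * a * b)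

theorem cayley_invCayley {p : R} (h2 : IsUnit (2 : R)) (hp : IsUnit (1 + p)) :
    cayley (invCayley p) = p := by
  have hq : (1 + p) * (1 + p)⁻¹ʳ = 1 := mul_inverse_cancel _ hp
  have hpq : Commute (1 + p)⁻¹ʳ p :=
    ((Commute.one_left p).add_left (Commute.refl p)).ringInverse_left
  have h_sub : 1 - invCayley p = 2 * (1 + p)⁻¹ʳ :=
    calc 1 - (p - 1) * (1 + p)⁻¹ʳ = (1 + p) * (1 + p)⁻¹ʳ - (p - 1) * (1 + p)⁻¹ʳ := by rw [hq]
      _ = 2 * (1 + p)⁻¹ʳ := by noncomm_ring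
  have h_add : (1 - invCayley p) * p = 1 + invCayley p :=
    calc (1 - invCayley p) * p = 2 * (p * (1 + p)⁻¹ʳ) := by rw [h_sub, mul_assoc, hpq.eq]
      _ = (1 + p) * (1 + p)⁻¹ʳ + (p - 1) * (1 + p)⁻¹ʳ := by noncomm_ring
      _ = 1 + invCayley p := by rw [hq, invCayley]
  rw [cayley, ← h_add, inverse_mul_cancel_left _ _ (h_sub ▸ h2.mul hp.ringInverse)]

theorem cayley_mul_cayley (a b : R) :
    cayley a * cayley b = (1 - a)⁻¹ʳ * ((1 + a) * (1 + b)) * (1 - b)⁻¹ʳ := by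
  have hb : Commute (1 - b)⁻¹ʳ (1 + b) :=
    ((Commute.one_right _).add_right ((Commute.one_left b).sub_left (Commute.refl b))).ringInverse_left
  rw [cayley, cayley, hb.eq]
  noncomm_ring

theorem one_add_cayley_mul_cayley {a b : R} (ha : IsUnit (1 - a)) (hb : IsUnit (1 - b)) :
    1 + cayley a * cayley b = (1 - a)⁻¹ʳ * (2 * (1 + a * b)) * (1 - b)⁻¹ʳ := by
  rw [cayley_mul_cayley, add_comm, inverse_mul_mul_inverse_add_one ha hb]
  noncomm_ring

theorem cayley_mul_cayley_sub_one {a b : R} (ha : IsUnit (1 - a)) (hb : IsUnit (1 - b)) :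
    cayley a * cayley b - 1 = (1 - a)⁻¹ʳ * (2 * (a + b)) * (1 - b)⁻¹ʳ := by
  rw [cayley_mul_cayley, inverse_mul_mul_inverse_sub_one ha hb]
  noncomm_ring

theorem isUnit_one_add_cayley_mul_cayley {a b : R} (h2 : IsUnit (2 : R)) (ha : IsUnit (1 - a))
    (hb : IsUnit (1 - b)) (hab : IsUnit (1 + a * b)) : IsUnit (1 + cayley a * cayley b) := by
  rw [one_add_cayley_mul_cayley ha hb]
  exact (ha.ringInverse.mul (h2.mul hab)).mul hb.ringInverse

theorem invCayley_cayley_mul_cayley {a b : R} (h2 : IsUnit (2 : R)) (ha : IsUnit (1 - a))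
    (hb : IsUnit (1 - b)) (hab : IsUnit (1 + a * b)) :
    invCayley (cayley a * cayley b) = (1 - a)⁻¹ʳ * (a + b) * (1 + a * b)⁻¹ʳ * (1 - a) := by
  rw [invCayley, cayley_mul_cayley_sub_one ha hb, one_add_cayley_mul_cayley ha hb,
    inverse_mul_mul_inverse_mul_inverse ha hb (h2.mul hab),
    two_mul_mul_inverse_two_mul h2, mul_assoc _ (a + b)]

theorem invCayley_cayley_mul_cayley_sub_cayleyBCHPoly {a b : R} (h2 : IsUnit (2 : R))
    (ha : IsUnit (1 - a)) (hb : IsUnit (1 - b)) (hab : IsUnit (1 + a * b)) :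
    invCayley (cayley a * cayley b) - cayleyBCHPoly a b =
      (1 - a)⁻¹ʳ * ((a + b) * a * b * a - a * (a * b * a + b * a * b) +
        (a + b) * (a * b) ^ 2 * (1 + a * b)⁻¹ʳ * (1 - a)) := by
  rw [invCayley_cayley_mul_cayley h2 ha hb hab]
  nth_rewrite 1 [inverse_one_add_eq hab]
  nth_rewrite 1 [← inverse_mul_cancel_left _ (cayleyBCHPoly a b) ha]
  rw [cayleyBCHPoly]
  noncomm_ring

end

section Analysis

variable {R : Type*} [NormedRing R] [HasSummableGeomSeries R]

theorem norm_inverse_one_sub_le {x : R} (hx : ‖x‖ ≤ 1 / 2) : ‖(1 - x)⁻¹ʳ‖ ≤ ‖(1 : R)‖ + 1 := by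
  have hx1 : ‖x‖ < 1 := by linarith
  rw [← geom_series_eq_inverse x hx1]
  refine (tsum_geometric_le_of_norm_lt_one x hx1).trans ?_
  have : (1 - ‖x‖)⁻¹ ≤ 2 := by
    rw [inv_le_comm₀ (by linarith) two_pos]; linarith
  linarith

theorem norm_inverse_one_add_le {x : R} (hx : ‖x‖ ≤ 1 / 2) : ‖(1 + x)⁻¹ʳ‖ ≤ ‖(1 : R)‖ + 1 := by
  simpa using norm_inverse_one_sub_le (x := -x) (by rwa [norm_neg])

theorem isUnit_one_add_of_norm_lt_one {x : R} (hx : ‖x‖ < 1) : IsUnit (1 + x) := by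
  simpa using isUnit_one_sub_of_norm_lt_one (x := -x) (by rwa [norm_neg])

theorem norm_invCayley_cayley_mul_cayley_sub_cayleyBCHPoly_le (h2 : IsUnit (2 : R)) {a b : R}
    {r : ℝ} (ha : ‖a‖ ≤ r) (hb : ‖b‖ ≤ r) (hr : r ≤ 1 / 2) :
    ‖invCayley (cayley a * cayley b) - cayleyBCHPoly a b‖ ≤
      (‖(1 : R)‖ + 1) * (4 + (‖(1 : R)‖ + 1) ^ 2) * r ^ 4 := by
  have hr0 : 0 ≤ r := (norm_nonneg a).trans ha
  have hab_le : ‖a * b‖ ≤ 1 / 4 := (norm_mul_le_of_le ha hb).trans (by nlinarith)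
  rw [invCayley_cayley_mul_cayley_sub_cayleyBCHPoly h2 (isUnit_one_sub_of_norm_lt_one (by linarith))
    (isUnit_one_sub_of_norm_lt_one (by linarith)) (isUnit_one_add_of_norm_lt_one (by linarith))]
  set k := ‖(1 : R)‖ + 1
  have hU : ‖(1 - a)⁻¹ʳ‖ ≤ k := norm_inverse_one_sub_le (by linarith)
  have hS : ‖(1 + a * b)⁻¹ʳ‖ ≤ k := norm_inverse_one_add_le (by linarith)
  have h1a : ‖1 - a‖ ≤ k := (norm_sub_le _ _).trans (by simp only [k]; linarith)
  have hab2 : ‖(a * b) ^ 2‖ ≤ r ^ 4 := by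
    rw [sq]
    exact (norm_mul_le_of_le (norm_mul_le_of_le ha hb) (norm_mul_le_of_le ha hb)).trans_eq (by ring)
  have hK₁ : ‖(a + b) * a * b * a - a * (a * b * a + b * a * b)‖ ≤ 4 * r ^ 4 := by
    have := add_le_add
      (norm_mul_le_of_le (norm_mul_le_of_le (norm_mul_le_of_le (norm_add_le_of_le ha hb) ha) hb) ha)
      (norm_mul_le_of_le ha (norm_add_le_of_le (norm_mul_le_of_le (norm_mul_le_of_le ha hb) ha)
        (norm_mul_le_of_le (norm_mul_le_of_le hb ha) hb)))
    exact (norm_sub_le _ _).trans (by linarith)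
  have hK₂ : ‖(a + b) * (a * b) ^ 2 * (1 + a * b)⁻¹ʳ * (1 - a)‖ ≤ k ^ 2 * r ^ 4 := by
    have := norm_mul_le_of_le
      (norm_mul_le_of_le (norm_mul_le_of_le (norm_add_le_of_le ha hb) hab2) hS) h1a
    have : 2 * r * (r ^ 4 * k ^ 2) ≤ 1 * (r ^ 4 * k ^ 2) := by gcongr; linarith
    nlinarith
  calc _ ≤ k * (4 * r ^ 4 + k ^ 2 * r ^ 4) := norm_mul_le_of_le hU (norm_add_le_of_le hK₁ hK₂)
    _ = k * (4 + k ^ 2) * r ^ 4 := by ring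

end Analysis

attribute [local instance] Matrix.frobeniusNormedAddCommGroup Matrix.frobeniusNormedSpace
  Matrix.frobeniusNormedRing

theorem cayley_BCH_two_general
    (n : ℕ)
    (A B : Matrix (Fin n) (Fin n) ℂ)
    (P Ωf : ℝ → Matrix (Fin n) (Fin n) ℂ)
    (hP : ∀ t : ℝ, P t =
      (1 - ((t:ℂ)/2) • A)⁻¹ * (1 + ((t:ℂ)/2) • A) *
      ((1 - ((t:ℂ)/2) • B)⁻¹ * (1 + ((t:ℂ)/2) • B)))
    (hΩ : ∀ t : ℝ, Ωf t = (2:ℂ) • ((P t - 1) * (1 + P t)⁻¹)) :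
    ∃ δ > 0,
      (∀ t : ℝ, |t| < δ →
        IsUnit (1 - ((t:ℂ)/2) • A) ∧ IsUnit (1 - ((t:ℂ)/2) • B) ∧
        IsUnit (1 + P t) ∧
        (1 - (1/2 : ℂ) • Ωf t)⁻¹ * (1 + (1/2 : ℂ) • Ωf t) = P t) ∧
      ∃ C₀ > 0, ∀ t : ℝ, |t| < δ →
        ‖Ωf t - ((t:ℂ) • (A + B)
          + ((t:ℂ)^2/2) • (A*B - B*A)
          - ((t:ℂ)^3/4) • (A*B*A + B*A*B))‖
          ≤ C₀ * |t|^4 := by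
  have : CompleteSpace (Matrix (Fin n) (Fin n) ℂ) := FiniteDimensional.complete ℂ _
  have h2 : IsUnit (2 : Matrix (Fin n) (Fin n) ℂ) := by
    exact_mod_cast (isUnit_of_invertible (2 : ℂ)).map (algebraMap ℂ (Matrix (Fin n) (Fin n) ℂ))
  simp only [Matrix.nonsing_inv_eq_ringInverse] at hP hΩ ⊢
  have hPc : ∀ t : ℝ, P t = cayley (((t:ℂ)/2) • A) * cayley (((t:ℂ)/2) • B) := hP
  have hΩc : ∀ t : ℝ, Ωf t = (2:ℂ) • invCayley (P t) := hΩ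
  set M := ‖A‖ + ‖B‖ + 1
  have hM : 0 < M := by positivity
  have hsmall : ∀ t : ℝ, |t| < M⁻¹ → ‖((t:ℂ)/2) • A‖ ≤ |t| / 2 * M ∧
      ‖((t:ℂ)/2) • B‖ ≤ |t| / 2 * M ∧ |t| / 2 * M ≤ 1 / 2 := by
    intro t ht
    have hc : ‖(t:ℂ)/2‖ = |t| / 2 := by simp
    have htM : |t| * M < 1 := by
      simpa [hM.ne'] using mul_lt_mul_of_pos_right ht hM
    refine ⟨(norm_smul_le _ _).trans ?_, (norm_smul_le _ _).trans ?_, by linarith⟩ <;>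
      rw [hc] <;> gcongr <;> linarith [norm_nonneg A, norm_nonneg B]
  set K := (‖(1 : Matrix (Fin n) (Fin n) ℂ)‖ + 1) * (4 + (‖(1 : Matrix (Fin n) (Fin n) ℂ)‖ + 1) ^ 2)
  refine ⟨M⁻¹, inv_pos.2 hM, fun t ht => ?_, K * M ^ 4 / 8, by positivity, fun t ht => ?_⟩
  · obtain ⟨ha, hb, hr⟩ := hsmall t ht
    have hua : IsUnit (1 - ((t:ℂ)/2) • A) := isUnit_one_sub_of_norm_lt_one (by linarith)
    have hub : IsUnit (1 - ((t:ℂ)/2) • B) := isUnit_one_sub_of_norm_lt_one (by linarith)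
    have hab : IsUnit (1 + ((t:ℂ)/2) • A * ((t:ℂ)/2) • B) := isUnit_one_add_of_norm_lt_one
      ((norm_mul_le_of_le ha hb).trans_lt (by nlinarith [(norm_nonneg _).trans ha]))
    have hunit : IsUnit (1 + P t) := hPc t ▸ isUnit_one_add_cayley_mul_cayley h2 hua hub hab
    refine ⟨hua, hub, hunit, ?_⟩
    rw [hΩc, smul_smul, one_div, inv_mul_cancel₀ two_ne_zero, one_smul]
    exact cayley_invCayley h2 hunit
  · obtain ⟨ha, hb, hr⟩ := hsmall t ht
    have hT : Ωf t - ((t:ℂ) • (A + B) + ((t:ℂ)^2/2) • (A*B - B*A) - ((t:ℂ)^3/4) • (A*B*A + B*A*B))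
        = (2:ℂ) • (invCayley (P t) - cayleyBCHPoly (((t:ℂ)/2) • A) (((t:ℂ)/2) • B)) := by
      simp only [hΩc, cayleyBCHPoly, smul_mul_assoc, mul_smul_comm, smul_smul]
      module
    rw [hT, norm_smul]
    have := norm_invCayley_cayley_mul_cayley_sub_cayleyBCHPoly_le h2 ha hb hr
    rw [← hPc] at this
    calc ‖(2:ℂ)‖ * _ ≤ 2 * (K * (|t| / 2 * M) ^ 4) := by rw [Complex.norm_two]; gcongr
      _ = K * M ^ 4 / 8 * |t| ^ 4 := by ring

/-- BCH-formula for a product of two Cayley transforms, up to order four. -/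
theorem cayley_BCH_two
    (n : ℕ) (hn : 1 ≤ n)
    (A B : Matrix (Fin n) (Fin n) ℂ)
    (P Ωf : ℝ → Matrix (Fin n) (Fin n) ℂ)
    (hP : ∀ t : ℝ, P t =
      (1 - ((t:ℂ)/2) • A)⁻¹ * (1 + ((t:ℂ)/2) • A) *
      ((1 - ((t:ℂ)/2) • B)⁻¹ * (1 + ((t:ℂ)/2) • B)))
    (hΩ : ∀ t : ℝ, Ωf t = (2:ℂ) • ((P t - 1) * (1 + P t)⁻¹)) :
    ∃ δ > 0,
      (∀ t : ℝ, |t| < δ →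
        IsUnit (1 - ((t:ℂ)/2) • A) ∧ IsUnit (1 - ((t:ℂ)/2) • B) ∧
        IsUnit (1 + P t) ∧
        (1 - (1/2 : ℂ) • Ωf t)⁻¹ * (1 + (1/2 : ℂ) • Ωf t) = P t) ∧
      ∃ C₀ > 0, ∀ t : ℝ, |t| < δ →
        ‖Ωf t - ((t:ℂ) • (A + B)
          + ((t:ℂ)^2/2) • (A*B - B*A)
          - ((t:ℂ)^3/4) • (A*B*A + B*A*B))‖
          ≤ C₀ * |t|^4 :=
  cayley_BCH_two_general n A B P Ωf hP hΩ
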